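/- arXiv:1807.09468 — 2 statements merged into one kernel-verified Lean document; each statement's English description precedes it below -/
import Mathlib

section
/- Let M and C be topological spaces and let F₁ ⊆ M, F₂ ⊆ M × C satisfy F₂ ⊆ F₁ ×ˢ (Set.univ : Set C). Let B ⊆ M be a set of sampled quotient-space configurations such that F₁ ⊆ closure (B ∩ F₁), and let α : ℕ → M × C be a sampling sequence whose range is dense in the sampling domain (B ∩ F₁) ×ˢ Set.univ, i.e. (B ∩ F₁) ×ˢ (Set.univ : Set C) ⊆ closure (Set.range α). Then F₂ ⊆ closure (Set.range α); that is, the sampling sequence α is dense in the feasible set F₂. -/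
/-- Induction step of the paper's Theorem 2: if the quotient-space samples `B`
are dense in the quotient feasible set `F₁` and the configuration-space
sampling sequence `α` is dense in the sampling domain `(B ∩ F₁) ×ˢ univ`, then
`α` is dense in the configuration-space feasible set `F₂`. -/
theorem sampling_sequence_dense_in_feasible_set
    {M C : Type*} [TopologicalSpace M] [TopologicalSpace C]
    (F₁ : Set M) (F₂ : Set (M × C))
    (hF : F₂ ⊆ F₁ ×ˢ (Set.univ : Set C))
    (B : Set M) (hB : F₁ ⊆ closure (B ∩ F₁))
    (α : ℕ → M × C)
    (hα : (B ∩ F₁) ×ˢ (Set.univ : Set C) ⊆ closure (Set.range α)) :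
    F₂ ⊆ closure (Set.range α) := by
  have h1 : F₂ ⊆ closure (B ∩ F₁) ×ˢ closure (Set.univ : Set C) :=
    hF.trans (Set.prod_mono hB (by simp))
  have h2 : closure (B ∩ F₁) ×ˢ closure (Set.univ : Set C)
      = closure ((B ∩ F₁) ×ˢ (Set.univ : Set C)) := (closure_prod_eq).symm
  calc F₂ ⊆ closure ((B ∩ F₁) ×ˢ (Set.univ : Set C)) := h2 ▸ h1
    _ ⊆ closure (closure (Set.range α)) := closure_mono hα
    _ = closure (Set.range α) := closure_closure
end

section
/- Let K be a positive natural number and for each k : Fin K let f k : ℕ → ℝ be a density function tending to infinity (Filter.Tendsto (f k) Filter.atTop Filter.atTop). Let s : ℕ → Fin K be a selection sequence and let c k n denote the number of indices m < n with s m = k. Assume that at every step n the selected index minimizes the current density, i.e. f (s n) (c (s n) n) ≤ f k (c k n) for all k : Fin K. Then every index k : Fin K is selected infinitely often, i.e. {n | s n = k} is infinite for every k. -/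
/-- If each quotient space's density tends to infinity with the number of
times it has been grown, and at each step the quotient space of minimal
density is selected, then every quotient space is selected infinitely often. -/
theorem min_density_selection_infinitely_often
    (K : ℕ) (hK : 0 < K) (f : Fin K → ℕ → ℝ)
    (hf : ∀ k : Fin K, Filter.Tendsto (f k) Filter.atTop Filter.atTop)
    (s : ℕ → Fin K) (c : Fin K → ℕ → ℕ)
    (hc : ∀ (k : Fin K) (n : ℕ),
      c k n = ((Finset.range n).filter (fun m => s m = k)).card)
    (hmin : ∀ (n : ℕ) (k : Fin K), f (s n) (c (s n) n) ≤ f k (c k n)) :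
    ∀ k : Fin K, {n : ℕ | s n = k}.Infinite := by
  intro k
  by_contra hfin
  rw [Set.not_infinite] at hfin
  obtain ⟨N, hN⟩ : ∃ N, ∀ m, s m = k → m < N := by
    obtain ⟨N, hNb⟩ := hfin.bddAbove
    exact ⟨N + 1, fun m hm => Nat.lt_succ_of_le (hNb hm)⟩
  have hck : ∀ n, N ≤ n → c k n = c k N := by
    intro n hn
    rw [hc, hc]
    congr 1
    apply Finset.ext
    intro m
    simp only [Finset.mem_filter, Finset.mem_range]
    constructor
    · rintro ⟨_, hm⟩; exact ⟨hN m hm, hm⟩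
    · rintro ⟨hm1, hm2⟩; exact ⟨lt_of_lt_of_le hm1 hn, hm2⟩
  obtain ⟨j, hj⟩ : ∃ j : Fin K, {n | s n = j}.Infinite := by
    by_contra h
    push_neg at h
    have huniv : (Set.univ : Set ℕ) = ⋃ j, {n | s n = j} := by
      ext n; simp
    exact Set.infinite_univ (huniv ▸ Set.finite_iUnion h)
  have hmono : Monotone (c j) := by
    intro a b hab
    rw [hc, hc]
    exact Finset.card_le_card
      (Finset.filter_subset_filter _ (Finset.range_subset_range.mpr hab))
  have hcj : ∀ M, ∃ n, M ≤ c j n := by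
    intro M
    obtain ⟨t, ht, htc⟩ := hj.exists_subset_card_eq M
    refine ⟨t.sup id + 1, ?_⟩
    rw [hc]
    have hsub : t ⊆ (Finset.range (t.sup id + 1)).filter (fun m => s m = j) := by
      intro m hm
      simp only [Finset.mem_filter, Finset.mem_range]
      exact ⟨Nat.lt_succ_of_le (Finset.le_sup (f := id) hm), ht hm⟩
    calc M = t.card := htc.symm
      _ ≤ _ := Finset.card_le_card hsub
  obtain ⟨M, hM⟩ : ∃ M, ∀ m, M ≤ m → f k (c k N) < f j m := by
    have := (hf j).eventually_gt_atTop (f k (c k N))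
    rw [Filter.eventually_atTop] at this
    obtain ⟨M, hM⟩ := this
    exact ⟨M, fun m hm => hM m hm⟩
  obtain ⟨n0, hn0⟩ := hcj M
  obtain ⟨n, hns, hnlt⟩ := hj.exists_gt (max n0 N)
  have hsn : s n = j := hns
  have h1 : f k (c k N) < f j (c j n) :=
    hM _ (le_trans hn0 (hmono (le_of_lt (lt_of_le_of_lt (le_max_left _ _) hnlt))))
  have h2 := hmin n k
  rw [hsn, hck n (le_of_lt (lt_of_le_of_lt (le_max_right _ _) hnlt))] at h2
  exact absurd h2 (not_le.mpr h1)
end
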